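/- Every continuous parametrized functional is parametrized fixed point adjoint to its conjugate: if ψ : hom(X,Y) × hom(P,Q) → hom(X,Y) is Scott-continuous and ψ̄ : hom(Y,X) × hom(Q,P) → hom(Y,X) is defined by ψ̄(g,q) = ψ(g†, q†)†, then for all p : P → Q, (pfix ψ)(p)† = (pfix ψ̄)(p†), where (pfix ψ)(p) = sup_n ψⁿ(⊥, p) with ψ⁰(x,p) = x and ψ^{n+1}(x,p) = ψ(ψⁿ(x,p), p). -/

import Mathlib

/-! The dagger is a monotone involution on hom-sets, hence an order isomorphism
`hom(X,Y) ≃o hom(Y,X)`. As such it fixes `⊥` and commutes with suprema of directed sets, and it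
carries the (increasing) iterates `ψⁿ(⊥,p)` onto the iterates `ψ̄ⁿ(⊥,p†)` of the conjugate. -/

open CategoryTheory

universe v u

/-- The `n`-fold parametrized iterate: `ψ⁰(x,p) = x`, `ψ^{n+1}(x,p) = ψ(ψⁿ(x,p), p)`. -/
def pIter {A B : Type*} (ψ : A × B → A) : ℕ → A → B → A
  | 0, x, _ => x
  | n + 1, x, p => ψ (pIter ψ n x p, p)

theorem map_pIter {A A' B B' : Type*} {ψ : A × B → A} {ψ' : A' × B' → A'} {f : A → A'}
    {g : B → B'} (h : ∀ a b, ψ' (f a, g b) = f (ψ (a, b))) (n : ℕ) (x : A) (p : B) :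
    f (pIter ψ n x p) = pIter ψ' n (f x) (g p) := by
  induction n with
  | zero => rfl
  | succ n ih => simp only [pIter, ← ih, h]

theorem monotone_pIter_bot {A B : Type*} [Preorder A] [OrderBot A] {ψ : A × B → A}
    (hψ : ∀ p, Monotone fun x => ψ (x, p)) (p : B) : Monotone fun n => pIter ψ n ⊥ p := by
  refine monotone_nat_of_le_succ fun n => ?_
  induction n with
  | zero => exact bot_le
  | succ n ih => exact hψ p ih

theorem OrderIso.map_iSup_of_directed {α β ι : Type*} [CompletePartialOrder α]
    [CompletePartialOrder β] (e : α ≃o β) {f : ι → α} (hf : Directed (· ≤ ·) f) :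
    e (⨆ i, f i) = ⨆ i, e (f i) := by
  have hlub := e.isLUB_image'.2 hf.directedOn_range.isLUB_sSup
  rw [← Set.range_comp] at hlub
  exact hlub.unique (hf.mono_comp _ e.monotone).directedOn_range.isLUB_sSup

/-- Every continuous parametrized functional is parametrized fixed
point adjoint to its conjugate: for Scott-continuous
`ψ : hom(X,Y) × hom(P,Q) → hom(X,Y)` and `ψ̄(g,q) = ψ(g†,q†)†`, for all
`p : P ⟶ Q`, `(pfix ψ)(p)† = (pfix ψ̄)(p†)`, where
`(pfix ψ)(p) = sup_n ψⁿ(⊥,p)`. -/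
theorem pfix_conjugate_adjoint {C : Type u} [Category.{v} C]
    [∀ X Y : C, CompletePartialOrder (X ⟶ Y)] [∀ X Y : C, OrderBot (X ⟶ Y)]
    (dag : ∀ {X Y : C}, (X ⟶ Y) → (Y ⟶ X))
    (dag_id : ∀ X : C, dag (𝟙 X) = 𝟙 X)
    (dag_comp : ∀ {X Y Z : C} (f : X ⟶ Y) (g : Y ⟶ Z), dag (f ≫ g) = dag g ≫ dag f)
    (dag_dag : ∀ {X Y : C} (f : X ⟶ Y), dag (dag f) = f)
    (dag_mono : ∀ {X Y : C} {f g : X ⟶ Y}, f ≤ g → dag f ≤ dag g)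
    (comp_cont : ∀ {X Y Z : C} (f : X ⟶ Y), ScottContinuous (fun g : Y ⟶ Z => f ≫ g))
    (comp_cont' : ∀ {X Y Z : C} (g : Y ⟶ Z), ScottContinuous (fun f : X ⟶ Y => f ≫ g))
    (comp_strict : ∀ {X Y Z : C} (f : X ⟶ Y) (g : Y ⟶ Z),
      f ≫ (⊥ : Y ⟶ Z) = (⊥ : X ⟶ Z) ∧ (⊥ : X ⟶ Y) ≫ g = (⊥ : X ⟶ Z))
    {X Y P Q : C} (ψ : (X ⟶ Y) × (P ⟶ Q) → (X ⟶ Y)) (hψ : ScottContinuous ψ) :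
    ∀ p : P ⟶ Q,
      dag (sSup (Set.range fun n => pIter ψ n ⊥ p)) =
        sSup (Set.range fun n =>
          pIter (fun gq : (Y ⟶ X) × (Q ⟶ P) => dag (ψ (dag gq.1, dag gq.2)))
            n ⊥ (dag p)) := by
  intro p
  let e : (X ⟶ Y) ≃o (Y ⟶ X) :=
    Equiv.toOrderIso ⟨dag, dag, dag_dag, dag_dag⟩ (fun _ _ => dag_mono) (fun _ _ => dag_mono)
  have hmono := monotone_pIter_bot (fun _ _ _ h => hψ.monotone (Prod.mk_le_mk.2 ⟨h, le_rfl⟩)) p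
  have hconj n : e (pIter ψ n ⊥ p) =
      pIter (fun gq : (Y ⟶ X) × (Q ⟶ P) => dag (ψ (dag gq.1, dag gq.2))) n ⊥ (dag p) := by
    refine (map_pIter (f := e) (g := dag) (fun a b => ?_) n ⊥ p).trans (by rw [e.map_bot])
    change dag (ψ (dag (dag a), dag (dag b))) = dag (ψ (a, b))
    rw [dag_dag, dag_dag]
  change e (⨆ n, _) = ⨆ n, _
  simp only [e.map_iSup_of_directed hmono.directed_le, hconj]
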